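/- Let κ ∈ ℝ and let (u, h, h1, h2, w) be a smooth solution on ℝ² of the generalized Kaup–Kupershmidt −1 flow system. Then ∂_x( w·w_{xx} − (1/2)w_x² + (1/2)u·w² − κ·( h·h_{xx} − (1/2)h_x² + (5/2)u·h² + h1·h2 ) ) = 0 at every point of ℝ²; that is, w·w_{xx} − (1/2)w_x² + (1/2)u·w² − κ·( h·h_{xx} − (1/2)h_x² + (5/2)u·h² + h1·h2 ) is a first integral (independent of x). -/

import Mathlib

/-- Partial derivative with respect to the first (time) variable. -/
noncomputable def pt (u : ℝ → ℝ → ℝ) : ℝ → ℝ → ℝ := fun t x => deriv (fun s => u s x) t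

/-- Partial derivative with respect to the second (space) variable. -/
noncomputable def px (u : ℝ → ℝ → ℝ) : ℝ → ℝ → ℝ := fun t x => deriv (fun y => u t y) x

/-- Smoothness of a function of two real variables. -/
def Smooth2 (u : ℝ → ℝ → ℝ) : Prop := ContDiff ℝ (⊤ : ℕ∞) (fun p : ℝ × ℝ => u p.1 p.2)

lemma Smooth2.slice {u : ℝ → ℝ → ℝ} (hu : Smooth2 u) (t : ℝ) :
    ContDiff ℝ (⊤ : ℕ∞) (fun y => u t y) :=
  hu.comp ((contDiff_const.prodMk contDiff_id))

lemma Smooth2.hasDerivAt_px {u : ℝ → ℝ → ℝ} (hu : Smooth2 u) (t x : ℝ) :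
    HasDerivAt (fun y => u t y) (px u t x) x :=
  (((hu.slice t).differentiable (by simp)).differentiableAt).hasDerivAt

lemma smooth2_px {u : ℝ → ℝ → ℝ} (hu : Smooth2 u) : Smooth2 (px u) := by
  have hF : ContDiff ℝ (⊤ : ℕ∞) (fun p : ℝ × ℝ => u p.1 p.2) := hu
  have key : ∀ t x : ℝ, px u t x = fderiv ℝ (fun p : ℝ × ℝ => u p.1 p.2) (t, x) (0, 1) := by
    intro t x
    have h1 : HasFDerivAt (fun p : ℝ × ℝ => u p.1 p.2)
        (fderiv ℝ (fun p : ℝ × ℝ => u p.1 p.2) (t, x)) (t, x) :=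
      ((hF.differentiable (by simp)) (t, x)).hasFDerivAt
    have h2 : HasDerivAt (fun y : ℝ => ((t, y) : ℝ × ℝ)) (0, 1) x := by
      have := (HasDerivAt.prodMk (hasDerivAt_const x t) (hasDerivAt_id x))
      simpa using this
    exact (h1.comp_hasDerivAt x h2).deriv
  have h3 : Smooth2 (fun t x => fderiv ℝ (fun p : ℝ × ℝ => u p.1 p.2) (t, x) (0, 1)) := by
    unfold Smooth2
    exact (hF.fderiv_right (by simp)).clm_apply contDiff_const
  unfold Smooth2 at h3 ⊢
  convert h3 using 2 with p
  exact key p.1 p.2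

/-- First integral of the generalized Kaup–Kupershmidt −1 flow system. -/
theorem kk_gen_neg1_first_integral
    (κ : ℝ) (u h h1 h2 w : ℝ → ℝ → ℝ)
    (hu : Smooth2 u) (hh : Smooth2 h) (hh1 : Smooth2 h1) (hh2 : Smooth2 h2) (hw : Smooth2 w)
    (sys1 : ∀ t x, pt u t x = h t x)
    (sys2 : ∀ t x, px (px (px w)) t x + u t x * px w t x + (1/2) * px u t x * w t x = κ * h t x)
    (sys3 : ∀ t x, w t x = px (px (px h)) t x + 5 * u t x * px h t x + (5/2) * px u t x * h t x
      + (px (px u) t x + 2 * (u t x)^2) * h1 t x + h2 t x)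
    (sys4 : ∀ t x, px h1 t x = h t x)
    (sys5 : ∀ t x, px h2 t x = (px (px u) t x + 2 * (u t x)^2) * h t x) :
    ∀ t x, px (fun t x =>
      w t x * px (px w) t x - (1/2) * (px w t x)^2 + (1/2) * u t x * (w t x)^2
      - κ * (h t x * px (px h) t x - (1/2) * (px h t x)^2
          + (5/2) * u t x * (h t x)^2 + h1 t x * h2 t x)) t x = 0 := by
  intro t x
  have Hw := hw.hasDerivAt_px t x
  have Hwx := (smooth2_px hw).hasDerivAt_px t x
  have Hwxx := (smooth2_px (smooth2_px hw)).hasDerivAt_px t x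
  have Hu := hu.hasDerivAt_px t x
  have Hh := hh.hasDerivAt_px t x
  have Hhx := (smooth2_px hh).hasDerivAt_px t x
  have Hhxx := (smooth2_px (smooth2_px hh)).hasDerivAt_px t x
  have Hh1 := hh1.hasDerivAt_px t x
  have Hh2 := hh2.hasDerivAt_px t x
  have big := (((Hw.mul Hwxx).sub ((Hwx.pow 2).const_mul ((1:ℝ)/2))).add
      ((Hu.const_mul ((1:ℝ)/2)).mul (Hw.pow 2))).sub
    (((((Hh.mul Hhxx).sub ((Hhx.pow 2).const_mul ((1:ℝ)/2))).add
      ((Hu.const_mul ((5:ℝ)/2)).mul (Hh.pow 2))).add (Hh1.mul Hh2)).const_mul κ)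
  show deriv (fun y =>
      w t y * px (px w) t y - (1/2) * (px w t y)^2 + (1/2) * u t y * (w t y)^2
      - κ * (h t y * px (px h) t y - (1/2) * (px h t y)^2
          + (5/2) * u t y * (h t y)^2 + h1 t y * h2 t y)) x = 0
  refine big.deriv.trans ?_
  simp only [Pi.pow_apply]
  linear_combination (w t x) * sys2 t x + κ * (h t x) * sys3 t x
    - κ * (h2 t x) * sys4 t x - κ * (h1 t x) * sys5 t x
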